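/- Let X and Y be real-valued random variables. Then law(X) ≽_lr law(Y) (the monotone likelihood ratio property with law(X) dominating) holds if and only if for every Borel set E with Pr(X ∈ E) > 0 and Pr(Y ∈ E) > 0, the conditional distribution of X given X ∈ E first-order stochastically dominates the conditional distribution of Y given Y ∈ E (uniform conditional stochastic dominance). -/

import Mathlib

/-!
Write `f = dμ/d(μ + ν)` and `g = dν/d(μ + ν)`. Both directions pass through the cross inequality
`μ A * ν B ≤ ν A * μ B` for measurable `A` lying below `B`; for `A = E ∩ Iic t` and
`B = E \ Iic t` it is exactly the dominance of the conditional distribution functions at `t`.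

If `f / g` is monotone off a null set, then `f x * g y ≤ g x * f y` for almost all `x ∈ A`,
`y ∈ B`, and integrating over `A × B` gives the cross inequality. Conversely, if `f / g`
is not monotone off any null set, there are rationals `p < q` and `t` such that
`A = {f / g > q} ∩ Iic t` and `B = {f / g < p} ∩ Ioi t` both have positive mass. On them
`q ν ≤ μ` and `μ ≤ p ν`, so `q * μ A * ν B ≤ p * μ A * ν B` by the cross inequality, which
is absurd.
-/

open MeasureTheory ProbabilityTheory Set

/-- The monotone likelihood ratio property (MLRP) for two distributions `F0` and `F1`
on a linearly ordered measurable space, with `F0` dominating: the ratio of the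
Radon–Nikodym derivatives of `F0` and `F1` with respect to the sum measure `F0 + F1`
is non-decreasing `(F0 + F1)`-almost everywhere (with the convention, automatic in
`ℝ≥0∞`, that the ratio is `∞` where the density of `F1` vanishes but that of `F0`
does not). -/
def MLRP {α : Type*} [MeasurableSpace α] [LinearOrder α]
    (F0 F1 : Measure α) : Prop :=
  ∃ S : Set α, (F0 + F1) S = 0 ∧
    ∀ x, x ∉ S → ∀ y, y ∉ S → x ≤ y →
      F0.rnDeriv (F0 + F1) x / F1.rnDeriv (F0 + F1) x ≤
        F0.rnDeriv (F0 + F1) y / F1.rnDeriv (F0 + F1) y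

open scoped ENNReal

theorem ENNReal.mul_le_mul_of_div_le_div {a b c d : ℝ≥0∞} (hb : b ≠ ∞) (hc : c ≠ ∞)
    (h : a / b ≤ c / d) : a * d ≤ b * c := by
  rcases eq_or_ne b 0 with rfl | hb0
  · rcases eq_or_ne a 0 with rfl | ha0
    · simp
    obtain ⟨-, hd⟩ : c ≠ 0 ∧ d = 0 := by
      simpa [ENNReal.div_zero ha0, ENNReal.div_eq_top, hc] using h
    simp [hd]
  calc a * d = b * (a / b) * d := by rw [ENNReal.mul_div_cancel hb0 hb]
    _ ≤ b * (d * (c / d)) := by rw [mul_assoc, mul_comm d]; gcongr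
    _ ≤ b * c := by gcongr; exact ENNReal.mul_div_le

theorem ENNReal.inv_add_mul_le_inv_add_mul_iff {a b c d : ℝ≥0∞} (ha : a ≠ ∞) (hb : b ≠ ∞)
    (hc : c ≠ ∞) (hd : d ≠ ∞) (hab : a + b ≠ 0) (hcd : c + d ≠ 0) :
    (a + b)⁻¹ * a ≤ (c + d)⁻¹ * c ↔ a * d ≤ c * b := by
  rw [← ENNReal.div_eq_inv_mul, ← ENNReal.div_eq_inv_mul,
    ENNReal.div_le_iff hab (ENNReal.add_ne_top.2 ⟨ha, hb⟩), ← ENNReal.mul_div_right_comm,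
    ENNReal.le_div_iff_mul_le (.inl hcd) (.inl (ENNReal.add_ne_top.2 ⟨hc, hd⟩)),
    mul_add, mul_add, mul_comm a c, ENNReal.add_le_add_iff_left (ENNReal.mul_ne_top hc ha)]

namespace MeasureTheory.Measure

variable {α : Type*} [MeasurableSpace α] {ρ μ₁ μ₂ : Measure α} [μ₁.HaveLebesgueDecomposition ρ]
  [μ₂.HaveLebesgueDecomposition ρ] [SFinite ρ]

theorem mul_measure_le_mul_measure_of_rnDeriv (h₁ : μ₁ ≪ ρ) (h₂ : μ₂ ≪ ρ) {s : Set α}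
    {c₁ c₂ : ℝ≥0∞} (h : ∀ x ∈ s, c₁ * μ₁.rnDeriv ρ x ≤ c₂ * μ₂.rnDeriv ρ x) :
    c₁ * μ₁ s ≤ c₂ * μ₂ s := by
  rw [← setLIntegral_rnDeriv h₁, ← setLIntegral_rnDeriv h₂,
    ← lintegral_const_mul _ (measurable_rnDeriv _ _),
    ← lintegral_const_mul _ (measurable_rnDeriv _ _)]
  exact setLIntegral_mono ((measurable_rnDeriv _ _).const_mul _) h

theorem measure_mul_measure_eq_lintegral_rnDeriv (h₁ : μ₁ ≪ ρ) (h₂ : μ₂ ≪ ρ) (A B : Set α) :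
    μ₁ A * μ₂ B = ∫⁻ x in A, ∫⁻ y in B, μ₁.rnDeriv ρ x * μ₂.rnDeriv ρ y ∂ρ ∂ρ := by
  rw [lintegral_lintegral_mul (measurable_rnDeriv _ _).aemeasurable
    (measurable_rnDeriv _ _).aemeasurable, setLIntegral_rnDeriv h₁, setLIntegral_rnDeriv h₂]

end MeasureTheory.Measure

noncomputable def likelihoodRatio {α : Type*} [MeasurableSpace α] (μ ν : Measure α) (x : α) :
    ℝ≥0∞ :=
  μ.rnDeriv (μ + ν) x / ν.rnDeriv (μ + ν) x

theorem measurable_likelihoodRatio {α : Type*} [MeasurableSpace α] {μ ν : Measure α} :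
    Measurable (likelihoodRatio μ ν) :=
  (Measure.measurable_rnDeriv _ _).div (Measure.measurable_rnDeriv _ _)

section likelihoodRatio

variable {α : Type*} [MeasurableSpace α] {μ ν : Measure α} [SigmaFinite μ] [SigmaFinite ν]

theorem mul_measure_le_of_subset_lt_likelihoodRatio {A : Set α} {q : ℝ≥0∞}
    (hA : A ⊆ {x | q < likelihoodRatio μ ν x}) : q * ν A ≤ μ A := by
  rw [← one_mul (μ A)]
  refine Measure.mul_measure_le_mul_measure_of_rnDeriv (.add_right' .rfl μ) (.add_right .rfl ν)
    fun x hx => ?_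
  rw [one_mul]
  exact ENNReal.mul_le_of_le_div (hA hx).le

theorem measure_le_mul_of_subset_likelihoodRatio_lt {B : Set α} {p : ℝ≥0∞} (hp : p ≠ ∞)
    (hB : B ⊆ {x | likelihoodRatio μ ν x < p}) : μ B ≤ p * ν B := by
  rw [← one_mul (μ B)]
  refine Measure.mul_measure_le_mul_measure_of_rnDeriv (.add_right .rfl ν) (.add_right' .rfl μ)
    fun x hx => ?_
  rw [one_mul, ← ENNReal.div_le_iff_le_mul (.inr hp) (.inr (pos_of_gt (hB hx)).ne')]
  exact (hB hx).le

theorem add_measure_eq_zero_or_of_likelihoodRatio_separated [IsFiniteMeasure μ]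
    [IsFiniteMeasure ν] {A B : Set α} {p q : ℝ≥0∞} (hpq : p < q)
    (hA : A ⊆ {x | q < likelihoodRatio μ ν x}) (hB : B ⊆ {x | likelihoodRatio μ ν x < p})
    (hcross : 0 < μ A → 0 < ν B → μ A * ν B ≤ ν A * μ B) :
    (μ + ν) A = 0 ∨ (μ + ν) B = 0 := by
  have hνA : q * ν A ≤ μ A := mul_measure_le_of_subset_lt_likelihoodRatio hA
  have hμB : μ B ≤ p * ν B := measure_le_mul_of_subset_likelihoodRatio_lt hpq.ne_top hB
  by_contra! hAB
  have hμA : μ A ≠ 0 := fun h0 => hAB.1 <| by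
    simpa [h0, (pos_of_gt hpq).ne'] using hνA
  have hνB : ν B ≠ 0 := fun h0 => hAB.2 <| by
    simpa [h0] using hμB
  have hq : q * (μ A * ν B) ≤ p * (μ A * ν B) := calc
    q * (μ A * ν B) ≤ q * (ν A * μ B) :=
      by gcongr q * ?_; exact hcross (pos_iff_ne_zero.2 hμA) (pos_iff_ne_zero.2 hνB)
    _ = q * ν A * μ B := by ring
    _ ≤ μ A * (p * ν B) := mul_le_mul' hνA hμB
    _ = p * (μ A * ν B) := by ring
  exact hpq.not_ge <| (ENNReal.mul_le_mul_iff_left (mul_ne_zero hμA hνB)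
    (ENNReal.mul_ne_top (measure_ne_top _ _) (measure_ne_top _ _))).1 hq

end likelihoodRatio

theorem exists_measure_eq_zero_forall_subset_or_subset {α ι : Type*} [MeasurableSpace α]
    [Countable ι] {ρ : Measure α} {P : ι → Prop} (A B : ι → Set α)
    (h : ∀ i, P i → ρ (A i) = 0 ∨ ρ (B i) = 0) :
    ∃ S, ρ S = 0 ∧ ∀ i, P i → A i ⊆ S ∨ B i ⊆ S := by
  have : ∀ i, ∃ s, ρ s = 0 ∧ (P i → A i ⊆ s ∨ B i ⊆ s) := by
    intro i
    by_cases hi : P i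
    · rcases h i hi with hA | hB
      · exact ⟨A i, hA, fun _ => .inl subset_rfl⟩
      · exact ⟨B i, hB, fun _ => .inr subset_rfl⟩
    · exact ⟨∅, measure_empty, hi.elim⟩
  choose s hs_null hs using this
  exact ⟨⋃ i, s i, measure_iUnion_null hs_null, fun i hi =>
    (hs i hi).imp (·.trans (subset_iUnion s i)) (·.trans (subset_iUnion s i))⟩

namespace MLRP

theorem measure_mul_le {α : Type*} [MeasurableSpace α] [LinearOrder α] {μ ν : Measure α}
    [SigmaFinite μ] [SigmaFinite ν] (h : MLRP μ ν) {A B : Set α}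
    (hA : MeasurableSet A) (hB : MeasurableSet B) (hAB : ∀ x ∈ A, ∀ y ∈ B, x ≤ y) :
    μ A * ν B ≤ ν A * μ B := by
  obtain ⟨S, hS, hmono⟩ := h
  set f := μ.rnDeriv (μ + ν)
  set g := ν.rnDeriv (μ + ν)
  have hμ : μ ≪ μ + ν := .add_right .rfl ν
  have hν : ν ≪ μ + ν := .add_right' .rfl μ
  have hgood : ∀ᵐ x ∂(μ + ν), x ∉ S ∧ f x ≠ ∞ ∧ g x ≠ ∞ := by
    filter_upwards [measure_eq_zero_iff_ae_notMem.mp hS, Measure.rnDeriv_lt_top μ (μ + ν),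
      Measure.rnDeriv_lt_top ν (μ + ν)] with x hxS hfx hgx
    exact ⟨hxS, hfx.ne, hgx.ne⟩
  have hcross : ∀ᵐ x ∂(μ + ν).restrict A, ∀ᵐ y ∂(μ + ν).restrict B,
      f x * g y ≤ g x * f y := by
    filter_upwards [ae_restrict_mem hA, ae_restrict_of_ae hgood] with x hxA hx
    filter_upwards [ae_restrict_mem hB, ae_restrict_of_ae hgood] with y hyB hy
    exact ENNReal.mul_le_mul_of_div_le_div hx.2.2 hy.2.1 (hmono x hx.1 y hy.1 (hAB x hxA y hyB))
  calc μ A * ν B = ∫⁻ x in A, ∫⁻ y in B, f x * g y ∂(μ + ν) ∂(μ + ν) :=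
        Measure.measure_mul_measure_eq_lintegral_rnDeriv hμ hν A B
    _ ≤ ∫⁻ x in A, ∫⁻ y in B, g x * f y ∂(μ + ν) ∂(μ + ν) :=
        lintegral_mono_ae (hcross.mono fun x hx => lintegral_mono_ae hx)
    _ = ν A * μ B := (Measure.measure_mul_measure_eq_lintegral_rnDeriv hν hμ A B).symm

theorem of_measure_mul_le {μ ν : Measure ℝ} [IsFiniteMeasure μ] [IsFiniteMeasure ν]
    (H : ∀ (A B : Set ℝ) (t : ℝ), MeasurableSet A → MeasurableSet B → A ⊆ Iic t → B ⊆ Ioi t →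
      0 < μ A → 0 < ν B → μ A * ν B ≤ ν A * μ B) :
    MLRP μ ν := by
  let r : ℚ → ℝ≥0∞ := fun q => Real.toNNReal q
  let A : ℚ × ℚ × ℚ → Set ℝ := fun i => {x | r i.2.1 < likelihoodRatio μ ν x} ∩ Iic (i.2.2 : ℝ)
  let B : ℚ × ℚ × ℚ → Set ℝ := fun i => {x | likelihoodRatio μ ν x < r i.1} ∩ Ioi (i.2.2 : ℝ)
  obtain ⟨S, hS, hAB⟩ := exists_measure_eq_zero_forall_subset_or_subset (ρ := μ + ν)
    (P := fun i => r i.1 < r i.2.1) A B fun i hi =>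
      add_measure_eq_zero_or_of_likelihoodRatio_separated hi inter_subset_left inter_subset_left
        (H _ _ _ ((measurableSet_lt measurable_const measurable_likelihoodRatio).inter
          measurableSet_Iic) ((measurableSet_lt measurable_likelihoodRatio measurable_const).inter
          measurableSet_Ioi) inter_subset_right inter_subset_right)
  refine ⟨S, hS, fun x hx y hy hxy => le_of_not_gt fun hlt => ?_⟩
  obtain ⟨p, -, hyp, hpx⟩ := ENNReal.lt_iff_exists_rat_btwn.1 hlt
  obtain ⟨q, -, hpq, hqx⟩ := ENNReal.lt_iff_exists_rat_btwn.1 hpx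
  obtain ⟨t, hxt, hty⟩ := exists_rat_btwn (hxy.lt_of_ne (by rintro rfl; exact hlt.false))
  rcases hAB (p, q, t) hpq with hA | hB
  · exact hx (hA ⟨hqx, hxt.le⟩)
  · exact hy (hB ⟨hyp, hty⟩)

end MLRP

theorem cond_le_cond_iff_mul_le {Ω : Type*} [MeasurableSpace Ω] {μ ν : Measure Ω}
    [IsFiniteMeasure μ] [IsFiniteMeasure ν] {E T : Set Ω} (hE : MeasurableSet E)
    (hT : MeasurableSet T) (hμE : μ E ≠ 0) (hνE : ν E ≠ 0) :
    μ[T|E] ≤ ν[T|E] ↔ μ (E ∩ T) * ν (E \ T) ≤ ν (E ∩ T) * μ (E \ T) := by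
  rw [← measure_inter_add_sdiff E hT] at hμE hνE
  rw [cond_apply hE, cond_apply hE, ← measure_inter_add_sdiff E hT (μ := μ),
    ← measure_inter_add_sdiff E hT (μ := ν)]
  exact ENNReal.inv_add_mul_le_inv_add_mul_iff (measure_ne_top _ _) (measure_ne_top _ _)
    (measure_ne_top _ _) (measure_ne_top _ _) hμE hνE

theorem measure_mul_le_of_forall_cond_Iic_le {α : Type*} [TopologicalSpace α] [LinearOrder α]
    [OrderClosedTopology α] [MeasurableSpace α] [OpensMeasurableSpace α] {μ ν : Measure α}
    [IsFiniteMeasure μ] [IsFiniteMeasure ν]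
    (H : ∀ E : Set α, MeasurableSet E → 0 < μ E → 0 < ν E → ∀ t : α, μ[Iic t|E] ≤ ν[Iic t|E])
    {A B : Set α} {t : α} (hA : MeasurableSet A) (hB : MeasurableSet B) (hAt : A ⊆ Iic t)
    (hBt : B ⊆ Ioi t) (hμA : 0 < μ A) (hνB : 0 < ν B) :
    μ A * ν B ≤ ν A * μ B := by
  have hEA : (A ∪ B) ∩ Iic t = A := by
    ext x; have := @hAt x; have := @hBt x
    simp only [mem_union, mem_inter_iff, mem_Iic, mem_Ioi] at *; grind
  have hEB : (A ∪ B) \ Iic t = B := by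
    ext x; have := @hAt x; have := @hBt x
    simp only [mem_union, mem_sdiff, mem_Iic, mem_Ioi] at *; grind
  have hμE : 0 < μ (A ∪ B) := hμA.trans_le (measure_mono subset_union_left)
  have hνE : 0 < ν (A ∪ B) := hνB.trans_le (measure_mono subset_union_right)
  have hcond := H (A ∪ B) (hA.union hB) hμE hνE t
  rwa [cond_le_cond_iff_mul_le (hA.union hB) measurableSet_Iic hμE.ne' hνE.ne', hEA, hEB]
    at hcond

theorem mlrp_iff_uniformConditionalStochasticDominance_general
    {Ω : Type*} [MeasurableSpace Ω] (P : Measure Ω) [IsProbabilityMeasure P]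
    (X Y : Ω → ℝ) :
    MLRP (P.map X) (P.map Y) ↔
      ∀ E : Set ℝ, MeasurableSet E → 0 < P.map X E → 0 < P.map Y E →
        ∀ t : ℝ, ((P.map X)[|E]) (Iic t) ≤ ((P.map Y)[|E]) (Iic t) := by
  refine ⟨fun h E hE hμE hνE t => ?_, fun H => MLRP.of_measure_mul_le ?_⟩
  · rw [cond_le_cond_iff_mul_le hE measurableSet_Iic hμE.ne' hνE.ne']
    exact h.measure_mul_le (hE.inter measurableSet_Iic) (hE.diff measurableSet_Iic)
      fun x hx y hy => hx.2.trans (not_le.1 hy.2).le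
  · exact fun A B t hA hB hAt hBt hμA hνB =>
      measure_mul_le_of_forall_cond_Iic_le H hA hB hAt hBt hμA hνB

/-- **Lemma A.3, MLRP ⟺ UCSD.**  For real-valued random variables `X` and `Y`,
`law(X) ≽_lr law(Y)` holds if and only if for every Borel set `E` with
`Pr(X ∈ E) > 0` and `Pr(Y ∈ E) > 0`, the conditional distribution of `X` given
`X ∈ E` first-order stochastically dominates that of `Y` given `Y ∈ E`. -/
theorem mlrp_iff_uniformConditionalStochasticDominance
    {Ω : Type*} [MeasurableSpace Ω] (P : Measure Ω) [IsProbabilityMeasure P]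
    (X Y : Ω → ℝ) (hX : Measurable X) (hY : Measurable Y) :
    MLRP (P.map X) (P.map Y) ↔
      ∀ E : Set ℝ, MeasurableSet E → 0 < P.map X E → 0 < P.map Y E →
        ∀ t : ℝ, ((P.map X)[|E]) (Iic t) ≤ ((P.map Y)[|E]) (Iic t) :=
  mlrp_iff_uniformConditionalStochasticDominance_general P X Y
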